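/- Assume the MAR condition and the ε-positivity condition, and let π̂ : 𝒳 → ℝ and μ̂ : 𝒳 → ℝ be measurable nuisance estimates with 1 − π̂(X) ≥ ε′ almost surely for some ε′ > 0, such that all quantities below are integrable. Then the population bias of the doubly robust functional equals a second-order product term: E[ ((1−R)/(1−π̂(X)))·(S − μ̂(X)) + μ̂(X) ] − ψ = E[ (π̂(X) − π(X))·(μ0(X) − μ̂(X)) / (1 − π̂(X)) ]. -/

import Mathlib

/-!
Conditioning on `X`, the weight `1 / (1 - π̂(X))` and the regression `μ̂(X)` pull out of the
conditional expectation, so the conditional mean of the doubly robust integrand is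
`E[(1-R) S | X] / (1 - π̂) + μ̂ (1 - (1 - π) / (1 - π̂))`. By MAR, `E[(1-R) S | X] = (1 - π) μ0`
with `μ0 = E[S | X]`, and this is `μ0 + (π̂ - π)(μ0 - μ̂) / (1 - π̂)`. Taking expectations,
`E[E[S | X]] = ψ` leaves exactly the product term.
-/

open MeasureTheory ProbabilityTheory Filter

section

variable {Ω : Type*} {m m₀ : MeasurableSpace Ω} {P : Measure Ω}

lemma norm_inv_le_inv_of_le {x c : ℝ} (hc : 0 < c) (hx : c ≤ x) : ‖x⁻¹‖ ≤ c⁻¹ := by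
  rw [norm_inv, Real.norm_of_nonneg (hc.le.trans hx)]
  exact inv_anti₀ hc hx

lemma MeasureTheory.Integrable.div_of_le {f d : Ω → ℝ} {c : ℝ} (hf : Integrable f P)
    (hd : AEMeasurable d P) (hc : 0 < c) (hcd : ∀ᵐ ω ∂P, c ≤ d ω) :
    Integrable (fun ω => f ω / d ω) P := by
  simp_rw [div_eq_inv_mul]
  exact hf.bdd_mul hd.inv.aestronglyMeasurable
    (hcd.mono fun ω hω => norm_inv_le_inv_of_le hc hω)

lemma condExp_one_sub (hm : m ≤ m₀) [IsFiniteMeasure P] {R : Ω → ℝ} (hR : Integrable R P) :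
    P[fun ω => 1 - R ω | m] =ᵐ[P] fun ω => 1 - (P[R | m]) ω := by
  have := condExp_sub (integrable_const (1 : ℝ)) hR m
  rwa [condExp_const hm] at this

lemma condExp_doublyRobust (hm : m ≤ m₀) [IsFiniteMeasure P] {A S d g : Ω → ℝ}
    (hd : Measurable[m] d) (hg : Measurable[m] g) {c : ℝ} (hc : 0 < c)
    (hcd : ∀ᵐ ω ∂P, c ≤ d ω) (hA : Integrable A P)
    (hAS : Integrable (fun ω => A ω * S ω) P)
    (hf : Integrable (fun ω => A ω / d ω * (S ω - g ω) + g ω) P) :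
    P[fun ω => A ω / d ω * (S ω - g ω) + g ω | m] =ᵐ[P]
      fun ω => (P[fun ω' => A ω' * S ω' | m]) ω / d ω
        + g ω * (1 - (P[A | m]) ω / d ω) := by
  have hd₀ : AEMeasurable d P := (hd.mono hm le_rfl).aemeasurable
  have hinv : StronglyMeasurable[m] fun ω => (d ω)⁻¹ := hd.inv.stronglyMeasurable
  have hweighted : Integrable (fun ω => (d ω)⁻¹ * (A ω * S ω)) P := by
    simpa only [div_eq_inv_mul] using hAS.div_of_le hd₀ hc hcd
  have hweight : Integrable (fun ω => (d ω)⁻¹ * A ω) P := by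
    simpa only [div_eq_inv_mul] using hA.div_of_le hd₀ hc hcd
  have hreg : Integrable (fun ω => g ω * (1 - (d ω)⁻¹ * A ω)) P := by
    refine (hf.sub hweighted).congr (Eventually.of_forall fun ω => ?_)
    simp only [Pi.sub_apply]; ring
  have hce_weighted : P[fun ω => (d ω)⁻¹ * (A ω * S ω) | m] =ᵐ[P]
      fun ω => (d ω)⁻¹ * (P[fun ω' => A ω' * S ω' | m]) ω :=
    condExp_mul_of_stronglyMeasurable_left hinv hweighted hAS
  have hce_one_sub : P[fun ω => 1 - (d ω)⁻¹ * A ω | m] =ᵐ[P]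
      fun ω => 1 - (d ω)⁻¹ * (P[A | m]) ω := by
    filter_upwards [condExp_one_sub hm hweight,
      condExp_mul_of_stronglyMeasurable_left hinv hweight hA] with ω h₁ h₂
    rw [h₁]
    exact congrArg (1 - ·) h₂
  have hce_reg : P[fun ω => g ω * (1 - (d ω)⁻¹ * A ω) | m] =ᵐ[P]
      fun ω => g ω * (1 - (d ω)⁻¹ * (P[A | m]) ω) :=
    (condExp_mul_of_stronglyMeasurable_left hg.stronglyMeasurable hreg
      ((integrable_const 1).sub hweight)).trans (EventuallyEq.rfl.mul hce_one_sub)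
  have hsplit : (fun ω => A ω / d ω * (S ω - g ω) + g ω) =
      (fun ω => (d ω)⁻¹ * (A ω * S ω)) + fun ω => g ω * (1 - (d ω)⁻¹ * A ω) := by
    ext ω; simp only [Pi.add_apply]; ring
  rw [hsplit]
  filter_upwards [condExp_add hweighted hreg m, hce_weighted, hce_reg] with ω h h₁ h₂
  rw [h, Pi.add_apply, h₁, h₂, div_eq_inv_mul, div_eq_inv_mul]

lemma integral_sub_integral_eq_of_condExp_eq_add (hm : m ≤ m₀) [IsFiniteMeasure P]
    {f S r : Ω → ℝ} (h : P[f | m] =ᵐ[P] fun ω => (P[S | m]) ω + r ω) :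
    ∫ ω, f ω ∂P - ∫ ω, S ω ∂P = ∫ ω, r ω ∂P := by
  have hr : r =ᵐ[P] P[f | m] - P[S | m] := by
    filter_upwards [h] with ω hω
    simp [hω]
  rw [integral_congr_ae hr, Pi.sub_def, integral_sub integrable_condExp integrable_condExp,
    integral_condExp hm, integral_condExp hm]

end

-- `(1 - π) * s / (1 - π)` is `μ0` once MAR has factored `E[(1-R) S | X]` as `(1 - π) E[S | X]`.
lemma doublyRobust_remainder_eq {π π' s g : ℝ} (hπ : 1 - π ≠ 0) (hπ' : 1 - π' ≠ 0) :
    (1 - π) * s / (1 - π') + g * (1 - (1 - π) / (1 - π'))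
      = s + (π' - π) * ((1 - π) * s / (1 - π) - g) / (1 - π') := by
  field_simp
  ring

/-- **The exact second-order bias computation `R₂(P̂, P)` in Step 1 of the proof of
Theorem 3.1.** Under MAR and ε-positivity, for measurable nuisance estimates `π̂, μ̂`
with `1 − π̂(X) ≥ ε′ > 0` a.s., the population bias of the doubly robust functional is
`E[((1−R)/(1−π̂(X)))·(S − μ̂(X)) + μ̂(X)] − ψ
  = E[(π̂(X) − π(X))·(μ0(X) − μ̂(X)) / (1 − π̂(X))]`. -/
theorem dr_bias_second_order
    {Ω 𝒳 : Type*} [MeasurableSpace Ω] [MeasurableSpace 𝒳]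
    (P : Measure Ω) [IsProbabilityMeasure P]
    (X : Ω → 𝒳) (hX : Measurable X)
    (R : Ω → ℝ) (hR : Measurable R) (hR01 : ∀ ω, R ω = 0 ∨ R ω = 1)
    (S : Ω → ℝ) (hSmeas : Measurable S) (hSint : Integrable S P)
    -- the σ-algebra generated by X
    (mX : MeasurableSpace Ω) (hmX : mX = MeasurableSpace.comap X inferInstance)
    -- MAR condition: E[(1−R)·S | mX] = E[1−R | mX] · E[S | mX] a.s.
    (hMAR : P[fun ω => (1 - R ω) * S ω|mX]
      =ᵐ[P] fun ω => (P[fun ω' => 1 - R ω'|mX]) ω * (P[S|mX]) ω)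
    -- ε-positivity condition: π(X) = E[R | mX] ≤ 1 − ε a.s.
    (ε : ℝ) (hε : 0 < ε)
    (hpos : ∀ᵐ ω ∂P, (P[R|mX]) ω ≤ 1 - ε)
    -- abbreviations: π(X), μ0(X) and ψ
    (πX μ0X : Ω → ℝ) (ψ : ℝ)
    (hπX : πX = P[R|mX])
    (hμ0X : μ0X = fun ω => (P[fun ω' => (1 - R ω') * S ω'|mX]) ω / (1 - πX ω))
    (hψ : ψ = ∫ ω, S ω ∂P)
    -- nuisance estimates
    (πhat μhat : 𝒳 → ℝ) (hπhat : Measurable πhat) (hμhat : Measurable μhat)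
    (ε' : ℝ) (hε' : 0 < ε')
    (hpos' : ∀ᵐ ω ∂P, ε' ≤ 1 - πhat (X ω))
    -- integrability of all quantities involved
    (hint1 : Integrable
      (fun ω => (1 - R ω) / (1 - πhat (X ω)) * (S ω - μhat (X ω)) + μhat (X ω)) P)
    (hint2 : Integrable
      (fun ω => (πhat (X ω) - πX ω) * (μ0X ω - μhat (X ω)) / (1 - πhat (X ω))) P) :
    (∫ ω, ((1 - R ω) / (1 - πhat (X ω)) * (S ω - μhat (X ω)) + μhat (X ω)) ∂P) - ψ
      = ∫ ω, (πhat (X ω) - πX ω) * (μ0X ω - μhat (X ω)) / (1 - πhat (X ω)) ∂P := by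
  subst hmX hπX hμ0X hψ
  have hm : MeasurableSpace.comap X inferInstance ≤ ‹MeasurableSpace Ω› := hX.comap_le
  have hXm : Measurable[MeasurableSpace.comap X inferInstance] X := comap_measurable X
  have hR_le : ∀ ω, ‖R ω‖ ≤ 1 ∧ ‖1 - R ω‖ ≤ 1 := fun ω => by
    rcases hR01 ω with h | h <;> simp [h]
  have hR_int : Integrable R P :=
    .of_bound hR.aestronglyMeasurable 1 (ae_of_all _ fun ω => (hR_le ω).1)
  have hRS_int : Integrable (fun ω => (1 - R ω) * S ω) P :=
    hSint.bdd_mul (measurable_const.sub hR).aestronglyMeasurable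
      (ae_of_all _ fun ω => (hR_le ω).2)
  have hce := condExp_doublyRobust (A := fun ω => 1 - R ω) (d := fun ω => 1 - πhat (X ω))
    (g := fun ω => μhat (X ω)) hm (measurable_const.sub (hπhat.comp hXm)) (hμhat.comp hXm)
    hε' hpos' ((integrable_const 1).sub hR_int) hRS_int hint1
  refine integral_sub_integral_eq_of_condExp_eq_add hm ?_
  filter_upwards [hce, hMAR, condExp_one_sub hm hR_int, hpos, hpos']
    with ω hω hMARω h1Rω hπ hπ'
  rw [hω, hMARω, h1Rω, doublyRobust_remainder_eq (by linarith) (by linarith)]
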